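/- Let Ω ⊆ ℝ² be a convex open set, f : Ω → ℝ a positive C² function, and W₁ : Ω → ℝ a C² solution of ΔW₁ = (Δf/f)·W₁ on Ω. Define the vector field Φ = (Φ₁,Φ₂) as the components of i·f²·∂_z̄(f^{-1}W₁) (so Φ₁ + iΦ₂ = i f² ∂_z̄(f^{-1}W₁)). Then Φ satisfies the compatibility condition ∂_yΦ₁ − ∂_xΦ₂ = 0 needed to apply the antiderivative operator Ā; i.e., the 1-form Φ₁ dx + Φ₂ dy is closed, equivalently curl of the corresponding field vanishes. -/

import Mathlib

/-- Partial derivative in `x` of a real-valued function on `ℝ²`. -/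
noncomputable def pdxR (F : ℝ × ℝ → ℝ) (p : ℝ × ℝ) : ℝ :=
  deriv (fun t => F (t, p.2)) p.1

/-- Partial derivative in `y` of a real-valued function on `ℝ²`. -/
noncomputable def pdyR (F : ℝ × ℝ → ℝ) (p : ℝ × ℝ) : ℝ :=
  deriv (fun t => F (p.1, t)) p.2

/-- The Laplacian of a real-valued function on `ℝ²`. -/
noncomputable def lapR (F : ℝ × ℝ → ℝ) (p : ℝ × ℝ) : ℝ :=
  pdxR (pdxR F) p + pdyR (pdyR F) p

/-- Partial derivative in `x` of a complex-valued function on `ℝ²`. -/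
noncomputable def pdx (F : ℝ × ℝ → ℂ) (p : ℝ × ℝ) : ℂ :=
  deriv (fun t => F (t, p.2)) p.1

/-- Partial derivative in `y` of a complex-valued function on `ℝ²`. -/
noncomputable def pdy (F : ℝ × ℝ → ℂ) (p : ℝ × ℝ) : ℂ :=
  deriv (fun t => F (p.1, t)) p.2

/-- The Wirtinger operator `∂_z̄ = ½(∂_x + i∂_y)`. -/
noncomputable def dzbar (F : ℝ × ℝ → ℂ) (p : ℝ × ℝ) : ℂ :=
  (pdx F p + Complex.I * pdy F p) / 2

/-- The Wirtinger operator `∂_z = ½(∂_x − i∂_y)`. -/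
noncomputable def dz (F : ℝ × ℝ → ℂ) (p : ℝ × ℝ) : ℂ :=
  (pdx F p - Complex.I * pdy F p) / 2

open Filter Topology Set

private lemma lineX_hasDerivAt {F : ℝ × ℝ → ℝ} {p : ℝ × ℝ} (h : DifferentiableAt ℝ F p) :
    HasDerivAt (fun t => F (t, p.2)) (fderiv ℝ F p (1, 0)) p.1 := by
  have hl : HasDerivAt (fun t : ℝ => (t, p.2)) ((1:ℝ), (0:ℝ)) p.1 :=
    (hasDerivAt_id p.1).prodMk (hasDerivAt_const _ _)
  exact h.hasFDerivAt.comp_hasDerivAt p.1 hl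

private lemma lineY_hasDerivAt {F : ℝ × ℝ → ℝ} {p : ℝ × ℝ} (h : DifferentiableAt ℝ F p) :
    HasDerivAt (fun t => F (p.1, t)) (fderiv ℝ F p (0, 1)) p.2 := by
  have hl : HasDerivAt (fun t : ℝ => (p.1, t)) ((0:ℝ), (1:ℝ)) p.2 :=
    (hasDerivAt_const _ _).prodMk (hasDerivAt_id p.2)
  exact h.hasFDerivAt.comp_hasDerivAt p.2 hl

private lemma pdxR_eq {F : ℝ × ℝ → ℝ} {p : ℝ × ℝ} (h : DifferentiableAt ℝ F p) :
    pdxR F p = fderiv ℝ F p (1, 0) := (lineX_hasDerivAt h).deriv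

private lemma pdyR_eq {F : ℝ × ℝ → ℝ} {p : ℝ × ℝ} (h : DifferentiableAt ℝ F p) :
    pdyR F p = fderiv ℝ F p (0, 1) := (lineY_hasDerivAt h).deriv

private lemma pdxR_congr {F G : ℝ × ℝ → ℝ} {s : Set (ℝ × ℝ)} (hs : IsOpen s) {p : ℝ × ℝ}
    (hp : p ∈ s) (h : Set.EqOn F G s) : pdxR F p = pdxR G p := by
  apply Filter.EventuallyEq.deriv_eq
  have hc : Continuous (fun t : ℝ => ((t, p.2) : ℝ × ℝ)) := by fun_prop
  have hev : ∀ᶠ t in 𝓝 p.1, ((t, p.2) : ℝ × ℝ) ∈ s :=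
    hc.continuousAt.preimage_mem_nhds (hs.mem_nhds hp)
  filter_upwards [hev] with t ht using h ht

private lemma pdyR_congr {F G : ℝ × ℝ → ℝ} {s : Set (ℝ × ℝ)} (hs : IsOpen s) {p : ℝ × ℝ}
    (hp : p ∈ s) (h : Set.EqOn F G s) : pdyR F p = pdyR G p := by
  apply Filter.EventuallyEq.deriv_eq
  have hc : Continuous (fun t : ℝ => ((p.1, t) : ℝ × ℝ)) := by fun_prop
  have hev : ∀ᶠ t in 𝓝 p.2, ((p.1, t) : ℝ × ℝ) ∈ s :=
    hc.continuousAt.preimage_mem_nhds (hs.mem_nhds hp)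
  filter_upwards [hev] with t ht using h ht

private lemma pdxR_mul {F G : ℝ × ℝ → ℝ} {p : ℝ × ℝ} (hF : DifferentiableAt ℝ F p)
    (hG : DifferentiableAt ℝ G p) :
    pdxR (fun q => F q * G q) p = pdxR F p * G p + F p * pdxR G p :=
  deriv_mul (lineX_hasDerivAt hF).differentiableAt (lineX_hasDerivAt hG).differentiableAt

private lemma pdyR_mul {F G : ℝ × ℝ → ℝ} {p : ℝ × ℝ} (hF : DifferentiableAt ℝ F p)
    (hG : DifferentiableAt ℝ G p) :
    pdyR (fun q => F q * G q) p = pdyR F p * G p + F p * pdyR G p :=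
  deriv_mul (lineY_hasDerivAt hF).differentiableAt (lineY_hasDerivAt hG).differentiableAt

private lemma pdxR_add {F G : ℝ × ℝ → ℝ} {p : ℝ × ℝ} (hF : DifferentiableAt ℝ F p)
    (hG : DifferentiableAt ℝ G p) :
    pdxR (fun q => F q + G q) p = pdxR F p + pdxR G p :=
  deriv_add (lineX_hasDerivAt hF).differentiableAt (lineX_hasDerivAt hG).differentiableAt

private lemma pdyR_add {F G : ℝ × ℝ → ℝ} {p : ℝ × ℝ} (hF : DifferentiableAt ℝ F p)
    (hG : DifferentiableAt ℝ G p) :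
    pdyR (fun q => F q + G q) p = pdyR F p + pdyR G p :=
  deriv_add (lineY_hasDerivAt hF).differentiableAt (lineY_hasDerivAt hG).differentiableAt

private lemma deriv_ofReal_comp (h : ℝ → ℝ) (x : ℝ) :
    deriv (fun t => ((h t : ℝ) : ℂ)) x = ((deriv h x : ℝ) : ℂ) := by
  by_cases hd : DifferentiableAt ℝ h x
  · exact hd.hasDerivAt.ofReal_comp.deriv
  · have hcd : ¬ DifferentiableAt ℝ (fun t => ((h t : ℝ) : ℂ)) x := by
      intro hc
      apply hd
      have : DifferentiableAt ℝ (fun t => ((h t : ℂ)).re) x :=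
        (Complex.reCLM.differentiable.differentiableAt).comp x hc
      simpa using this
    rw [deriv_zero_of_not_differentiableAt hd, deriv_zero_of_not_differentiableAt hcd,
      Complex.ofReal_zero]

/-- Integrability step for the conjugate metaharmonic function: if
`ΔW₁ = (Δf/f)·W₁` on a convex open `Ω` and `Φ = i f² ∂_z̄(f⁻¹W₁)`, then
`∂_yΦ₁ − ∂_xΦ₂ = 0` on `Ω` (the 1-form `Φ₁ dx + Φ₂ dy` is closed). -/
theorem conjugate_integrability
    (Ω : Set (ℝ × ℝ)) (hΩ : IsOpen Ω) (hconv : Convex ℝ Ω)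
    (f : ℝ × ℝ → ℝ) (hf : ContDiffOn ℝ 2 f Ω) (hfpos : ∀ p ∈ Ω, 0 < f p)
    (W₁ : ℝ × ℝ → ℝ) (hW₁ : ContDiffOn ℝ 2 W₁ Ω)
    (hSch : ∀ p ∈ Ω, lapR W₁ p = lapR f p / f p * W₁ p)
    (Φ₁ Φ₂ : ℝ × ℝ → ℝ)
    (hΦ : ∀ p : ℝ × ℝ,
      (Φ₁ p : ℂ) + (Φ₂ p : ℂ) * Complex.I =
        Complex.I * (f p : ℂ) ^ 2 *
          dzbar (fun q => (((f q)⁻¹ * W₁ q : ℝ) : ℂ)) p) :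
    ∀ p ∈ Ω, pdyR Φ₁ p - pdxR Φ₂ p = 0 := by
  set g : ℝ × ℝ → ℝ := fun q => (f q)⁻¹ * W₁ q with hg_def
  -- Step 1: identify Φ₁, Φ₂
  have hΦ₁ : Φ₁ = fun q => -(f q ^ 2 * pdyR g q) / 2 := by
    funext q
    have h := hΦ q
    have hx : pdx (fun q => (((f q)⁻¹ * W₁ q : ℝ) : ℂ)) q = ((pdxR g q : ℝ) : ℂ) :=
      deriv_ofReal_comp (fun t => g (t, q.2)) q.1
    have hy : pdy (fun q => (((f q)⁻¹ * W₁ q : ℝ) : ℂ)) q = ((pdyR g q : ℝ) : ℂ) :=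
      deriv_ofReal_comp (fun t => g (q.1, t)) q.2
    rw [dzbar, hx, hy] at h
    have hre := congrArg Complex.re h
    simp [← Complex.ofReal_pow, Complex.ext_iff, Complex.add_re, Complex.mul_re, Complex.div_re] at hre
    ring_nf at hre ⊢
    linarith [hre]
  have hΦ₂ : Φ₂ = fun q => f q ^ 2 * pdxR g q / 2 := by
    funext q
    have h := hΦ q
    have hx : pdx (fun q => (((f q)⁻¹ * W₁ q : ℝ) : ℂ)) q = ((pdxR g q : ℝ) : ℂ) :=
      deriv_ofReal_comp (fun t => g (t, q.2)) q.1
    have hy : pdy (fun q => (((f q)⁻¹ * W₁ q : ℝ) : ℂ)) q = ((pdyR g q : ℝ) : ℂ) :=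
      deriv_ofReal_comp (fun t => g (q.1, t)) q.2
    rw [dzbar, hx, hy] at h
    have him := congrArg Complex.im h
    simp [← Complex.ofReal_pow, Complex.ext_iff, Complex.add_im, Complex.mul_im, Complex.div_im] at him
    ring_nf at him ⊢
    linarith [him]
  intro p hp
  -- smoothness setup
  have hfne : ∀ q ∈ Ω, f q ≠ 0 := fun q hq => (hfpos q hq).ne'
  have hgC : ContDiffOn ℝ 2 g Ω := (hf.inv hfne).mul hW₁
  set Fx : ℝ × ℝ → ℝ := fun q => fderiv ℝ f q (1, 0) with hFx_def
  set Fy : ℝ × ℝ → ℝ := fun q => fderiv ℝ f q (0, 1) with hFy_def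
  set Gx : ℝ × ℝ → ℝ := fun q => fderiv ℝ g q (1, 0) with hGx_def
  set Gy : ℝ × ℝ → ℝ := fun q => fderiv ℝ g q (0, 1) with hGy_def
  have hfd' : ContDiffOn ℝ 1 (fun q => fderiv ℝ f q) Ω :=
    hf.fderiv_of_isOpen hΩ (by norm_num)
  have hgd' : ContDiffOn ℝ 1 (fun q => fderiv ℝ g q) Ω :=
    hgC.fderiv_of_isOpen hΩ (by norm_num)
  have hFxC : ContDiffOn ℝ 1 Fx Ω := hfd'.clm_apply contDiffOn_const
  have hFyC : ContDiffOn ℝ 1 Fy Ω := hfd'.clm_apply contDiffOn_const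
  have hGxC : ContDiffOn ℝ 1 Gx Ω := hgd'.clm_apply contDiffOn_const
  have hGyC : ContDiffOn ℝ 1 Gy Ω := hgd'.clm_apply contDiffOn_const
  -- differentiability at points of Ω
  have dAt : ∀ {F : ℝ × ℝ → ℝ}, ContDiffOn ℝ 1 F Ω → ∀ q ∈ Ω, DifferentiableAt ℝ F q :=
    fun hF q hq => (hF.contDiffAt (hΩ.mem_nhds hq)).differentiableAt one_ne_zero
  have hfD : ∀ q ∈ Ω, DifferentiableAt ℝ f q := dAt (hf.of_le one_le_two)
  have hWD : ∀ q ∈ Ω, DifferentiableAt ℝ W₁ q := dAt (hW₁.of_le one_le_two)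
  have hgD : ∀ q ∈ Ω, DifferentiableAt ℝ g q := dAt (hgC.of_le one_le_two)
  have hFxD := dAt hFxC; have hFyD := dAt hFyC
  have hGxD := dAt hGxC; have hGyD := dAt hGyC
  -- partials equal fderiv components on Ω
  have epfx : Set.EqOn (pdxR f) Fx Ω := fun q hq => pdxR_eq (hfD q hq)
  have epfy : Set.EqOn (pdyR f) Fy Ω := fun q hq => pdyR_eq (hfD q hq)
  have epgx : Set.EqOn (pdxR g) Gx Ω := fun q hq => pdxR_eq (hgD q hq)
  have epgy : Set.EqOn (pdyR g) Gy Ω := fun q hq => pdyR_eq (hgD q hq)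
  -- W₁ = f * g on Ω
  have hWfg : Set.EqOn W₁ (fun q => f q * g q) Ω := by
    intro q hq
    simp only [hg_def]
    field_simp [hfne q hq]
  -- expand lapR f p
  have hlapf : lapR f p = pdxR Fx p + pdyR Fy p := by
    rw [lapR, pdxR_congr hΩ hp epfx, pdyR_congr hΩ hp epfy]
  -- expand lapR W₁ p
  have epWx : Set.EqOn (pdxR W₁) (fun q => Fx q * g q + f q * Gx q) Ω := by
    intro q hq
    rw [pdxR_congr hΩ hq hWfg, pdxR_mul (hfD q hq) (hgD q hq), epfx hq, epgx hq]
  have epWy : Set.EqOn (pdyR W₁) (fun q => Fy q * g q + f q * Gy q) Ω := by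
    intro q hq
    rw [pdyR_congr hΩ hq hWfg, pdyR_mul (hfD q hq) (hgD q hq), epfy hq, epgy hq]
  have hlapW : lapR W₁ p =
      (pdxR Fx p * g p + Fx p * Gx p + (Fx p * Gx p + f p * pdxR Gx p)) +
      (pdyR Fy p * g p + Fy p * Gy p + (Fy p * Gy p + f p * pdyR Gy p)) := by
    rw [lapR, pdxR_congr hΩ hp epWx, pdyR_congr hΩ hp epWy,
      pdxR_add (F := fun q => Fx q * g q) (G := fun q => f q * Gx q) ((hFxD p hp).mul (hgD p hp)) ((hfD p hp).mul (hGxD p hp)),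
      pdyR_add (F := fun q => Fy q * g q) (G := fun q => f q * Gy q) ((hFyD p hp).mul (hgD p hp)) ((hfD p hp).mul (hGyD p hp)),
      pdxR_mul (hFxD p hp) (hgD p hp), pdxR_mul (hfD p hp) (hGxD p hp),
      pdyR_mul (hFyD p hp) (hgD p hp), pdyR_mul (hfD p hp) (hGyD p hp),
      epgx hp, epgy hp, epfx hp, epfy hp]
  -- the key identity
  have hW1p : W₁ p = f p * g p := hWfg hp
  have key : 2 * (Fx p * Gx p + Fy p * Gy p) + f p * (pdxR Gx p + pdyR Gy p) = 0 := by
    have h := hSch p hp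
    rw [hlapW, hlapf, hW1p] at h
    have h2 : (pdxR Fx p + pdyR Fy p) / f p * (f p * g p)
        = (pdxR Fx p + pdyR Fy p) * g p := by
      field_simp [hfne p hp]
    rw [h2] at h
    linarith
  -- compute the goal
  rw [hΦ₁, hΦ₂]
  have e1 : pdyR (fun q => -(f q ^ 2 * pdyR g q) / 2) p
      = (-(1:ℝ)/2) * pdyR (fun q => f q * f q * pdyR g q) p := by
    rw [show (fun q => -(f q ^ 2 * pdyR g q) / 2)
        = fun q => (-(1:ℝ)/2) * (f q * f q * pdyR g q) from funext fun q => by ring]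
    simp only [pdyR]
    exact deriv_const_mul_field _
  have e2 : pdxR (fun q => f q ^ 2 * pdxR g q / 2) p
      = ((1:ℝ)/2) * pdxR (fun q => f q * f q * pdxR g q) p := by
    rw [show (fun q => f q ^ 2 * pdxR g q / 2)
        = fun q => ((1:ℝ)/2) * (f q * f q * pdxR g q) from funext fun q => by ring]
    simp only [pdxR]
    exact deriv_const_mul_field _
  have e3 : pdxR (fun q => f q * f q * pdxR g q) p
      = (Fx p * f p + f p * Fx p) * Gx p + f p * f p * pdxR Gx p := by
    have : Set.EqOn (fun q => f q * f q * pdxR g q) (fun q => f q * f q * Gx q) Ω :=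
      fun q hq => by simp only [epgx hq]
    rw [pdxR_congr hΩ hp this,
      pdxR_mul (F := fun q => f q * f q) ((hfD p hp).mul (hfD p hp)) (hGxD p hp),
      pdxR_mul (hfD p hp) (hfD p hp), epfx hp]
  have e4 : pdyR (fun q => f q * f q * pdyR g q) p
      = (Fy p * f p + f p * Fy p) * Gy p + f p * f p * pdyR Gy p := by
    have : Set.EqOn (fun q => f q * f q * pdyR g q) (fun q => f q * f q * Gy q) Ω :=
      fun q hq => by simp only [epgy hq]
    rw [pdyR_congr hΩ hp this,
      pdyR_mul (F := fun q => f q * f q) ((hfD p hp).mul (hfD p hp)) (hGyD p hp),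
      pdyR_mul (hfD p hp) (hfD p hp), epfy hp]
  rw [e1, e2, e3, e4]
  linear_combination (-(f p)/2) * key
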